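/- Let θ > 1 and b > 0, and let {X_{k,n} : k,n ≥ 1} be a double array of independent identically distributed reflected Weibull random variables with probability density p(x) = (θ/(2b)) (|x|/b)^{θ−1} exp(−(|x|/b)^θ). Set φ(x) = ((θ−1)/θ) (θ/b^θ)^{1/(θ−1)} |x|^{θ/(θ−1)}, whose Young–Fenchel transform is ψ(x) = (|x|/b)^θ. If the common φ-subgaussian norm of the X_{k,n} satisfies τ_φ(X_{k,n}) ≤ 1, then max_{1 ≤ k ≤ m, 1 ≤ n ≤ j} X_{k,n} − b (ln(mj))^{1/θ} → 0 almost surely as m ∨ j → ∞. -/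

import Mathlib

open MeasureTheory Real Filter Set

/-- An Orlicz N-function: continuous, even, convex, vanishing at `0`, monotone
increasing on `[0, ∞)`, with `φ x / x → 0` as `x → 0⁺` and `φ x / x → ∞` as `x → ∞`. -/
structure IsOrliczN (φ : ℝ → ℝ) : Prop where
  continuous : Continuous φ
  even : ∀ x, φ (-x) = φ x
  convexOn : ConvexOn ℝ Set.univ φ
  map_zero : φ 0 = 0
  strictMonoOn : StrictMonoOn φ (Set.Ici 0)
  tendsto_zero : Tendsto (fun x => φ x / x) (nhdsWithin 0 (Set.Ioi 0)) (nhds 0)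
  tendsto_atTop : Tendsto (fun x => φ x / x) atTop atTop

/-- `ψ` is the Young–Fenchel transform of `φ`: `ψ x = sup_{y ∈ ℝ} (x * y - φ y)`. -/
def IsYoungFenchel (φ ψ : ℝ → ℝ) : Prop :=
  ∀ x, IsLUB {z | ∃ y, z = x * y - φ y} (ψ x)

/-- The moment generating function bound `E exp(t X) ≤ exp (φ (a t))` with constant `a > 0`. -/
def PhiMGF (φ : ℝ → ℝ) {Ω : Type*} [MeasurableSpace Ω] (P : Measure Ω) (X : Ω → ℝ)
    (a : ℝ) : Prop :=
  0 < a ∧ ∀ t : ℝ, Integrable (fun ω => Real.exp (t * X ω)) P ∧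
    ∫ ω, Real.exp (t * X ω) ∂P ≤ Real.exp (φ (a * t))

/-- `X` is a `φ`-subgaussian random variable: centered, with an MGF bound. -/
def IsPhiSubGaussian (φ : ℝ → ℝ) {Ω : Type*} [MeasurableSpace Ω] (P : Measure Ω)
    (X : Ω → ℝ) : Prop :=
  Integrable X P ∧ (∫ ω, X ω ∂P) = 0 ∧ ∃ a, PhiMGF φ P X a

/-- The `φ`-subgaussian norm `τ_φ(X)`. -/
noncomputable def tauPhi (φ : ℝ → ℝ) {Ω : Type*} [MeasurableSpace Ω] (P : Measure Ω)
    (X : Ω → ℝ) : ℝ :=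
  sInf {a | PhiMGF φ P X a}

/-- `max_{1 ≤ k ≤ m, 1 ≤ n ≤ j} X_{k,n}(ω)`. -/
noncomputable def runMax {Ω : Type*} (X : ℕ → ℕ → Ω → ℝ) (m j : ℕ) (ω : Ω) : ℝ :=
  sSup {y | ∃ k n, 1 ≤ k ∧ k ≤ m ∧ 1 ≤ n ∧ n ≤ j ∧ y = X k n ω}

/-- Convergence of a double array `b m j` to `l` as `m ∨ j → ∞`. -/
def TendstoMaxIdx (b : ℕ → ℕ → ℝ) (l : ℝ) : Prop :=
  ∀ ε > 0, ∃ N : ℕ, ∀ m j : ℕ, 1 ≤ m → 1 ≤ j → N ≤ max m j → |b m j - l| < ε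

open ProbabilityTheory Asymptotics Topology

/-!
Write `L = log (m j)`. A single variable exceeds `x ≥ 0` with probability `exp (-(x / b) ^ θ) / 2`.

Upper bound: for `2 ^ p ≤ m < 2 ^ (p + 1)` and `2 ^ q ≤ j < 2 ^ (q + 1)` the running maximum is
at most the maximum over the block `2 ^ (p + 1) × 2 ^ (q + 1)`, and `L ≥ (p + q) log 2`. A union
bound over the `4 · 2 ^ (p + q)` variables of the block shows that its maximum exceeds
`b ((p + q) log 2) ^ (1 / θ) + ε` with probability at most `4 exp (-c (p + q) ^ ((θ - 1) / θ))`: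
Bernoulli's inequality `(a + v) ^ θ ≥ a ^ θ + θ a ^ (θ - 1) v` turns the shift by `ε` into this
stretched-exponential gain, which is summable over `ℕ × ℕ`.

Lower bound: by independence, the maximum of `m j` variables stays below `b L ^ (1 / θ) - ε` with
probability at most `exp (-(m j) · exp (-(L ^ (1 / θ) - ε / b) ^ θ) / 2) = O ((m j) ^ (-2))`, again
by Bernoulli's inequality, and this is summable over `ℕ × ℕ`.

Borel–Cantelli over `ℕ × ℕ`, whose cofinite filter is exactly `m ∨ j → ∞`, and a countable
intersection over `ε` finish the proof.
-/

lemma rpow_add_mul_rpow_sub_one_le_add_rpow {θ a v : ℝ} (hθ : 1 ≤ θ) (ha : 0 ≤ a)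
    (hv : 0 ≤ v) : a ^ θ + θ * a ^ (θ - 1) * v ≤ (a + v) ^ θ := by
  rcases hv.eq_or_lt with rfl | hv
  · simp
  have hderiv := Real.hasDerivAt_rpow_const (x := a) (Or.inr hθ)
  have hslope := (convexOn_rpow hθ).deriv_le_slope ha (by simp; positivity)
    (lt_add_of_pos_right a hv) hderiv.differentiableAt
  rw [hderiv.deriv, slope_def_field, add_sub_cancel_left, le_div_iff₀ hv] at hslope
  linarith

lemma isLittleO_rpow_exp_mul_rpow (s : ℝ) {c β : ℝ} (hc : 0 < c) (hβ : 0 < β) :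
    (fun x : ℝ => x ^ s) =o[atTop] fun x => exp (c * x ^ β) := by
  have h := (isLittleO_rpow_exp_pos_mul_atTop (s / β) hc).comp_tendsto (tendsto_rpow_atTop hβ)
  refine h.congr' ?_ EventuallyEq.rfl
  filter_upwards [eventually_ge_atTop 0] with x hx
  simp only [Function.comp_apply, ← rpow_mul hx, mul_div_cancel₀ s hβ.ne']

lemma summable_exp_neg_mul_rpow {c β : ℝ} (hc : 0 < c) (hβ : 0 < β) :
    Summable fun n : ℕ => exp (-(c * (n : ℝ) ^ β)) := by
  have h := ((isLittleO_rpow_exp_mul_rpow 2 hc hβ).inv_rev ?_).comp_tendsto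
    tendsto_natCast_atTop_atTop
  · refine summable_of_isBigO_nat (summable_nat_pow_inv.2 one_lt_two) (h.isBigO.congr ?_ ?_)
    · intro n; simp [exp_neg]
    · intro n; simp
  · filter_upwards [eventually_gt_atTop 0] with x hx h0
    exact absurd h0 (rpow_pos_of_pos hx _).ne'

lemma exists_le_add_exp_mul_rpow (M : ℝ) {c β : ℝ} (hc : 0 < c) (hβ : 0 < β) :
    ∃ D, ∀ x, 0 ≤ x → M * x ≤ D + exp (c * x ^ β) := by
  obtain ⟨x₀, hx₀⟩ := eventually_atTop.1
    (((isLittleO_rpow_exp_mul_rpow 1 hc hβ).const_mul_left M).bound one_pos)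
  refine ⟨|M| * |x₀|, fun x hx => ?_⟩
  rcases le_total x₀ x with h | h
  · have := hx₀ x h
    simp only [rpow_one, norm_mul, Real.norm_eq_abs, one_mul, abs_exp] at this
    nlinarith [le_abs_self (M * x), abs_nonneg M, abs_nonneg x₀, (abs_mul M x).symm]
  · nlinarith [exp_pos (c * x ^ β), le_abs_self M, abs_nonneg M, le_abs_self x₀]

lemma summable_exp_neg_mul_rpow_add {c β : ℝ} (hc : 0 < c) (hβ : 0 < β) :
    Summable fun p : ℕ × ℕ => exp (-(c * ((p.1 + p.2 : ℕ) : ℝ) ^ β)) := by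
  have h := summable_exp_neg_mul_rpow (half_pos hc) hβ
  refine Summable.of_nonneg_of_le (fun _ => (exp_pos _).le) (fun p => ?_)
    (h.mul_of_nonneg h (fun _ => (exp_pos _).le) (fun _ => (exp_pos _).le))
  have h1 : (p.1 : ℝ) ^ β ≤ ((p.1 + p.2 : ℕ) : ℝ) ^ β := by gcongr; simp
  have h2 : (p.2 : ℝ) ^ β ≤ ((p.1 + p.2 : ℕ) : ℝ) ^ β := by gcongr; simp
  rw [← exp_add]
  gcongr
  nlinarith

lemma rpow_one_div_sub_rpow_le {θ v L : ℝ} (hθ : 1 ≤ θ) (hL : 0 ≤ L) (hv : 0 ≤ v)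
    (h2v : 2 * v ≤ L ^ (1 / θ)) :
    (L ^ (1 / θ) - v) ^ θ ≤ L - θ * v / 2 ^ (θ - 1) * L ^ ((θ - 1) / θ) := by
  have hθ0 : θ ≠ 0 := by positivity
  have ha : 0 ≤ L ^ (1 / θ) - v := by linarith
  have hbern := rpow_add_mul_rpow_sub_one_le_add_rpow hθ ha hv
  rw [sub_add_cancel, ← rpow_mul hL, one_div_mul_cancel hθ0, rpow_one] at hbern
  have hhalf : L ^ ((θ - 1) / θ) / 2 ^ (θ - 1) ≤ (L ^ (1 / θ) - v) ^ (θ - 1) := by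
    calc L ^ ((θ - 1) / θ) / 2 ^ (θ - 1) = (L ^ (1 / θ) / 2) ^ (θ - 1) := by
          rw [div_rpow (by positivity) zero_le_two, ← rpow_mul hL, one_div_mul_eq_div]
      _ ≤ (L ^ (1 / θ) - v) ^ (θ - 1) := by gcongr; linarith
  have : θ * v / 2 ^ (θ - 1) * L ^ ((θ - 1) / θ) ≤ θ * (L ^ (1 / θ) - v) ^ (θ - 1) * v := by
    calc θ * v / 2 ^ (θ - 1) * L ^ ((θ - 1) / θ)
        = θ * (L ^ ((θ - 1) / θ) / 2 ^ (θ - 1)) * v := by ring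
      _ ≤ θ * (L ^ (1 / θ) - v) ^ (θ - 1) * v := by gcongr
  linarith

lemma exists_exp_neg_mul_exp_neg_rpow_le {θ v : ℝ} (hθ : 1 < θ) (hv : 0 < v) :
    ∃ K, ∀ N : ℝ, 1 ≤ N →
      exp (-(N * (exp (-max (log N ^ (1 / θ) - v) 0 ^ θ) / 2))) ≤ K / N ^ 2 := by
  set β := (θ - 1) / θ
  set c := θ * v / 2 ^ (θ - 1)
  obtain ⟨D, hD⟩ := exists_le_add_exp_mul_rpow 4 (c := c) (β := β) (by positivity)
    (div_pos (by linarith) (by linarith))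
  refine ⟨max (exp (D / 2)) (exp (2 * (2 * v) ^ θ)), fun N hN => ?_⟩
  set L := log N
  have hL : 0 ≤ L := log_nonneg hN
  have hN2 : N ^ 2 = exp (2 * L) := by
    rw [mul_comm, exp_mul, exp_log (by linarith)]; norm_cast
  rw [hN2, div_eq_mul_inv (max _ _), ← exp_neg]
  rcases le_or_gt (2 * v) (L ^ (1 / θ)) with h2v | h2v
  · have hsub := rpow_one_div_sub_rpow_le hθ.le hL hv.le h2v
    rw [max_eq_left (by linarith)]
    have hNexp : exp (c * L ^ β) ≤ N * exp (-(L ^ (1 / θ) - v) ^ θ) := by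
      rw [← exp_log (by linarith : 0 < N), ← exp_add]
      gcongr
      linarith
    calc exp (-(N * (exp (-(L ^ (1 / θ) - v) ^ θ) / 2)))
        ≤ exp (D / 2 + -(2 * L)) := by
          gcongr
          linarith [hD L hL]
      _ ≤ _ := by
          rw [exp_add]
          gcongr
          exact le_max_left _ _
  · have hLθ : L < (2 * v) ^ θ := by
      have := rpow_lt_rpow (by positivity) h2v (by linarith : (0 : ℝ) < θ)
      rwa [← rpow_mul hL, one_div_mul_cancel (by linarith), rpow_one] at this
    calc exp (-(N * (exp (-max (L ^ (1 / θ) - v) 0 ^ θ) / 2)))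
        ≤ exp (2 * (2 * v) ^ θ + -(2 * L)) := by
          gcongr
          have : 0 ≤ N * (exp (-max (L ^ (1 / θ) - v) 0 ^ θ) / 2) := by positivity
          linarith
      _ ≤ _ := by
          rw [exp_add]
          gcongr
          exact le_max_right _ _

lemma two_pow_mul_exp_neg_rpow_le {θ v : ℝ} (hθ : 1 ≤ θ) (hv : 0 ≤ v) (s : ℕ) :
    (2 : ℝ) ^ (s + 2) * exp (-((s * log 2) ^ (1 / θ) + v) ^ θ)
      ≤ 4 * exp (-(θ * v * log 2 ^ ((θ - 1) / θ) * (s : ℝ) ^ ((θ - 1) / θ))) := by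
  have hA : 0 ≤ (s : ℝ) * log 2 := by positivity
  have hθ0 : θ ≠ 0 := by positivity
  have hbern := rpow_add_mul_rpow_sub_one_le_add_rpow hθ (rpow_nonneg hA (1 / θ)) hv
  rw [← rpow_mul hA, ← rpow_mul hA, one_div_mul_cancel hθ0, rpow_one, one_div_mul_eq_div,
    mul_rpow (Nat.cast_nonneg s) (log_nonneg one_le_two)] at hbern
  have h2 : (2 : ℝ) ^ (s + 2) = 4 * exp (s * log 2) := by
    rw [exp_nat_mul, exp_log two_pos]; ring
  rw [h2, mul_assoc, ← exp_add]
  gcongr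
  linarith

lemma Nat.tendsto_log_atTop {b : ℕ} (hb : 1 < b) : Tendsto (Nat.log b) atTop atTop :=
  tendsto_atTop_atTop_of_monotone (fun _ _ => Nat.log_mono_right) fun n =>
    ⟨b ^ n, (Nat.log_pow hb n).ge⟩

lemma tendsto_prodMap_log_cofinite {b : ℕ} (hb : 1 < b) :
    Tendsto (Prod.map (Nat.log b) (Nat.log b)) cofinite cofinite := by
  have h := Nat.cofinite_eq_atTop ▸ Nat.tendsto_log_atTop hb
  simpa only [coprod_cofinite] using h.prodMap_coprod h

lemma natCast_log_add_log_mul_log_two_le {m j : ℕ} (hm : m ≠ 0) (hj : j ≠ 0) :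
    ((Nat.log 2 m + Nat.log 2 j : ℕ) : ℝ) * log 2 ≤ log ((m * j : ℕ) : ℝ) := by
  rw [← Real.log_pow]
  refine Real.log_le_log (by positivity) ?_
  rw [pow_add]
  exact_mod_cast Nat.mul_le_mul (Nat.pow_log_le_self 2 hm) (Nat.pow_log_le_self 2 hj)

lemma ae_eventually_cofinite_notMem_of_le_ofReal {Ω ι : Type*} [MeasurableSpace Ω] [Countable ι]
    {μ : Measure Ω} {s : ι → Set Ω} {f : ι → ℝ} (hf : Summable f)
    (hs : ∀ i, μ (s i) ≤ ENNReal.ofReal (f i)) : ∀ᵐ ω ∂μ, ∀ᶠ i in cofinite, ω ∉ s i := by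
  have hsum : ∑' i, μ (s i) ≠ ⊤ :=
    ne_top_of_le_ne_top hf.tsum_ofReal_ne_top (ENNReal.tsum_le_tsum hs)
  filter_upwards [ae_finite_setOfPred_mem hsum] with ω hω
  exact eventually_cofinite.2 (by simpa using hω)

section RunMax

variable {Ω : Type*} (X : ℕ → ℕ → Ω → ℝ)

lemma runMax_eq_sup' {m j : ℕ} (hm : 1 ≤ m) (hj : 1 ≤ j) (ω : Ω) :
    runMax X m j ω = (Finset.Icc 1 m ×ˢ Finset.Icc 1 j).sup'
      ((Finset.nonempty_Icc.2 hm).product (Finset.nonempty_Icc.2 hj)) (fun p => X p.1 p.2 ω) := by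
  rw [Finset.sup'_eq_csSup_image, runMax]
  congr 1
  ext y
  simp only [mem_ofPred_eq, Finset.coe_product, Finset.coe_Icc, mem_image, mem_prod, mem_Icc,
    Prod.exists]
  constructor
  · rintro ⟨k, n, hk, hkm, hn, hnj, rfl⟩; exact ⟨k, n, ⟨⟨hk, hkm⟩, hn, hnj⟩, rfl⟩
  · rintro ⟨k, n, ⟨⟨hk, hkm⟩, hn, hnj⟩, rfl⟩; exact ⟨k, n, hk, hkm, hn, hnj, rfl⟩

lemma runMax_mono {m j m' j' : ℕ} (hm : 1 ≤ m) (hj : 1 ≤ j) (hmm' : m ≤ m') (hjj' : j ≤ j')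
    (ω : Ω) : runMax X m j ω ≤ runMax X m' j' ω := by
  rw [runMax_eq_sup' X hm hj, runMax_eq_sup' X (hm.trans hmm') (hj.trans hjj')]
  exact Finset.sup'_mono _
    (Finset.product_subset_product (Finset.Icc_subset_Icc_right hmm')
      (Finset.Icc_subset_Icc_right hjj')) _

variable {X} [MeasurableSpace Ω] {P : Measure Ω}

lemma measure_lt_runMax_le {m j : ℕ} (hm : 1 ≤ m) (hj : 1 ≤ j) {x : ℝ} {q : ENNReal}
    (hq : ∀ k n, 1 ≤ k → 1 ≤ n → P {ω | x < X k n ω} ≤ q) :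
    P {ω | x < runMax X m j ω} ≤ (m * j : ℕ) * q := by
  have hset : {ω | x < runMax X m j ω}
      = ⋃ p ∈ Finset.Icc 1 m ×ˢ Finset.Icc 1 j, {ω | x < X p.1 p.2 ω} := by
    ext ω
    rw [mem_ofPred_eq, runMax_eq_sup' X hm hj, Finset.lt_sup'_iff]
    simp
  calc P {ω | x < runMax X m j ω}
      ≤ ∑ p ∈ Finset.Icc 1 m ×ˢ Finset.Icc 1 j, P {ω | x < X p.1 p.2 ω} :=
        hset ▸ measure_biUnion_finset_le _ _
    _ ≤ ∑ _p ∈ Finset.Icc 1 m ×ˢ Finset.Icc 1 j, q := by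
        refine Finset.sum_le_sum fun p hp => ?_
        simp only [Finset.mem_product, Finset.mem_Icc] at hp
        exact hq _ _ hp.1.1 hp.2.1
    _ = (m * j : ℕ) * q := by simp [nsmul_eq_mul]

lemma measure_runMax_lt_le (hindep : iIndepFun (fun p : ℕ × ℕ => X p.1 p.2) P)
    {m j : ℕ} (hm : 1 ≤ m) (hj : 1 ≤ j) {x q : ℝ}
    (hq : ∀ k n, 1 ≤ k → 1 ≤ n → P {ω | X k n ω < x} ≤ ENNReal.ofReal (1 - q)) :
    P {ω | runMax X m j ω < x} ≤ ENNReal.ofReal (exp (-((m * j : ℕ) * q))) := by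
  have hset : {ω | runMax X m j ω < x}
      = ⋂ p ∈ Finset.Icc 1 m ×ˢ Finset.Icc 1 j, {ω | X p.1 p.2 ω < x} := by
    ext ω
    rw [mem_ofPred_eq, runMax_eq_sup' X hm hj, Finset.sup'_lt_iff]
    simp
  calc P {ω | runMax X m j ω < x}
      = ∏ p ∈ Finset.Icc 1 m ×ˢ Finset.Icc 1 j, P {ω | X p.1 p.2 ω < x} :=
        hset ▸ hindep.meas_biInter fun p _ => ⟨Iio x, measurableSet_Iio, rfl⟩
    _ ≤ ∏ _p ∈ Finset.Icc 1 m ×ˢ Finset.Icc 1 j, ENNReal.ofReal (1 - q) := by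
        refine Finset.prod_le_prod' fun p hp => ?_
        simp only [Finset.mem_product, Finset.mem_Icc] at hp
        exact hq _ _ hp.1.1 hp.2.1
    _ ≤ ENNReal.ofReal (exp (-q)) ^ (m * j) := by
        rw [Finset.prod_const, Finset.card_product, Nat.card_Icc, Nat.card_Icc]
        exact pow_le_pow_left₀ zero_le
          (ENNReal.ofReal_le_ofReal (by linarith [add_one_le_exp (-q)])) _
    _ = ENNReal.ofReal (exp (-((m * j : ℕ) * q))) := by
        rw [← ENNReal.ofReal_pow (exp_pos _).le, ← exp_nat_mul, neg_mul_eq_mul_neg]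

end RunMax

section ReflectedWeibull

noncomputable def reflectedWeibull (θ b : ℝ) : Measure ℝ :=
  volume.withDensity fun x =>
    ENNReal.ofReal (θ / (2 * b) * (|x| / b) ^ (θ - 1) * exp (-(|x| / b) ^ θ))

variable {θ b : ℝ}

lemma hasDerivAt_neg_exp_neg_div_rpow (hb : 0 < b) {t : ℝ} (ht : 0 < t) :
    HasDerivAt (fun t => -exp (-(t / b) ^ θ) / 2)
      (θ / (2 * b) * (t / b) ^ (θ - 1) * exp (-(t / b) ^ θ)) t := by
  have h := ((((hasDerivAt_id t).div_const b).rpow_const (p := θ)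
    (Or.inl (div_pos ht hb).ne')).neg.exp.neg).div_const 2
  refine h.congr_deriv ?_
  simp only [id, Pi.neg_apply]
  ring

lemma reflectedWeibull_Ioi (hθ : 0 < θ) (hb : 0 < b) {x : ℝ} (hx : 0 ≤ x) :
    reflectedWeibull θ b (Ioi x) = ENNReal.ofReal (exp (-(x / b) ^ θ) / 2) := by
  set g : ℝ → ℝ := fun t => -exp (-(t / b) ^ θ) / 2
  set g' : ℝ → ℝ := fun t => θ / (2 * b) * (t / b) ^ (θ - 1) * exp (-(t / b) ^ θ)
  have hcont : ContinuousWithinAt g (Ici x) x := by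
    have : ContinuousAt (fun t : ℝ => (t / b) ^ θ) x :=
      (continuousAt_id.div_const b).rpow_const (Or.inr hθ.le)
    exact (this.neg.rexp.neg.div_const 2).continuousWithinAt
  have hderiv : ∀ t ∈ Ioi x, HasDerivAt g (g' t) t := fun t ht =>
    hasDerivAt_neg_exp_neg_div_rpow hb (hx.trans_lt ht)
  have hpos : ∀ t ∈ Ioi x, 0 ≤ g' t := fun t ht => by
    have := rpow_nonneg (div_pos (hx.trans_lt ht) hb).le (θ - 1)
    positivity
  have hlim : Tendsto g atTop (𝓝 0) := by
    have := tendsto_neg_atTop_atBot.comp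
      ((tendsto_rpow_atTop hθ).comp (tendsto_id.atTop_div_const hb))
    simpa [g] using (tendsto_exp_atBot.comp this).neg.div_const 2
  have hdens : ∀ t ∈ Ioi x, ENNReal.ofReal (θ / (2 * b) * (|t| / b) ^ (θ - 1)
      * exp (-(|t| / b) ^ θ)) = ENNReal.ofReal (g' t) := fun t ht => by
    rw [abs_of_pos (hx.trans_lt ht)]
  rw [reflectedWeibull, withDensity_apply _ measurableSet_Ioi, setLIntegral_congr_fun
    measurableSet_Ioi hdens, ← ofReal_integral_eq_lintegral_ofReal
    (integrableOn_Ioi_deriv_of_nonneg hcont hderiv hpos hlim)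
    ((ae_restrict_iff' measurableSet_Ioi).2 (ae_of_all _ hpos)),
    integral_Ioi_of_hasDerivAt_of_nonneg hcont hderiv hpos hlim]
  simp [g, neg_div]

variable {Ω : Type*} [MeasurableSpace Ω] {P : Measure Ω} {Y : Ω → ℝ}

lemma measure_lt_of_map_eq_reflectedWeibull (hθ : 0 < θ) (hb : 0 < b) (hY : Measurable Y)
    (hlaw : P.map Y = reflectedWeibull θ b) {x : ℝ} (hx : 0 ≤ x) :
    P {ω | x < Y ω} = ENNReal.ofReal (exp (-(x / b) ^ θ) / 2) := by
  rw [← reflectedWeibull_Ioi hθ hb hx, ← hlaw, Measure.map_apply hY measurableSet_Ioi]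
  rfl

lemma measure_lt_le_of_map_eq_reflectedWeibull [IsProbabilityMeasure P] (hθ : 0 < θ)
    (hb : 0 < b) (hY : Measurable Y) (hlaw : P.map Y = reflectedWeibull θ b) {x : ℝ}
    (hx : 0 ≤ x) : P {ω | Y ω < x} ≤ ENNReal.ofReal (1 - exp (-(x / b) ^ θ) / 2) := by
  calc P {ω | Y ω < x} ≤ P {ω | x < Y ω}ᶜ :=
        measure_mono fun ω (h : Y ω < x) (h' : x < Y ω) => lt_asymm h h'
    _ = ENNReal.ofReal (1 - exp (-(x / b) ^ θ) / 2) := by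
      rw [prob_compl_eq_one_sub (measurableSet_lt measurable_const hY),
        measure_lt_of_map_eq_reflectedWeibull hθ hb hY hlaw hx,
        ENNReal.ofReal_sub _ (by positivity), ENNReal.ofReal_one]

end ReflectedWeibull

section UpperBound

variable {Ω : Type*} [MeasurableSpace Ω] {P : Measure Ω} {X : ℕ → ℕ → Ω → ℝ} {θ b : ℝ}

lemma ae_eventually_runMax_le (hθ : 1 < θ) (hb : 0 < b)
    (htail : ∀ k n, 1 ≤ k → 1 ≤ n → ∀ x, 0 ≤ x →
      P {ω | x < X k n ω} ≤ ENNReal.ofReal (exp (-(x / b) ^ θ))) {ε : ℝ} (hε : 0 < ε) :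
    ∀ᵐ ω ∂P, ∀ᶠ p : ℕ × ℕ in cofinite, 1 ≤ p.1 → 1 ≤ p.2 →
      runMax X p.1 p.2 ω ≤ b * log ((p.1 * p.2 : ℕ) : ℝ) ^ (1 / θ) + ε := by
  set v := ε / b
  set β := (θ - 1) / θ
  set B : ℕ × ℕ → Set Ω := fun p => {ω | b * (((p.1 + p.2 : ℕ) : ℝ) * log 2) ^ (1 / θ) + ε <
    runMax X (2 ^ (p.1 + 1)) (2 ^ (p.2 + 1)) ω}
  have hB : ∀ p, P (B p) ≤
      ENNReal.ofReal (4 * exp (-(θ * v * log 2 ^ β * ((p.1 + p.2 : ℕ) : ℝ) ^ β))) := by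
    rintro ⟨p, q⟩
    have hx : 0 ≤ b * (((p + q : ℕ) : ℝ) * log 2) ^ (1 / θ) + ε := by positivity
    have hxb : (b * (((p + q : ℕ) : ℝ) * log 2) ^ (1 / θ) + ε) / b
        = (((p + q : ℕ) : ℝ) * log 2) ^ (1 / θ) + v := by
      rw [add_div, mul_div_cancel_left₀ _ hb.ne']
    calc P (B (p, q)) ≤ ((2 ^ (p + 1) * 2 ^ (q + 1) : ℕ) : ENNReal) * ENNReal.ofReal
          (exp (-((((p + q : ℕ) : ℝ) * log 2) ^ (1 / θ) + v) ^ θ)) := by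
          rw [← hxb]
          exact measure_lt_runMax_le Nat.one_le_two_pow Nat.one_le_two_pow
            fun k n hk hn => htail k n hk hn _ hx
      _ = ENNReal.ofReal ((2 : ℝ) ^ (p + q + 2) *
          exp (-((((p + q : ℕ) : ℝ) * log 2) ^ (1 / θ) + v) ^ θ)) := by
          rw [← ENNReal.ofReal_natCast, ← ENNReal.ofReal_mul (by positivity)]
          congr 2
          push_cast
          ring
      _ ≤ _ := ENNReal.ofReal_le_ofReal
          (two_pow_mul_exp_neg_rpow_le hθ.le (by positivity) (p + q))
  have hβ : 0 < β := div_pos (by linarith) (by linarith)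
  have hc : 0 < θ * v * log 2 ^ β := by
    have : 0 < v := div_pos hε hb
    have : 0 < log 2 := log_pos one_lt_two
    positivity
  filter_upwards [ae_eventually_cofinite_notMem_of_le_ofReal
    ((summable_exp_neg_mul_rpow_add hc hβ).mul_left 4) hB] with ω hω
  filter_upwards [(tendsto_prodMap_log_cofinite one_lt_two).eventually hω]
  rintro ⟨m, j⟩ hmj hm hj
  calc runMax X m j ω ≤ runMax X (2 ^ (Nat.log 2 m + 1)) (2 ^ (Nat.log 2 j + 1)) ω :=
        runMax_mono X hm hj (Nat.lt_pow_succ_log_self one_lt_two m).le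
          (Nat.lt_pow_succ_log_self one_lt_two j).le ω
    _ ≤ b * (((Nat.log 2 m + Nat.log 2 j : ℕ) : ℝ) * log 2) ^ (1 / θ) + ε := not_lt.1 hmj
    _ ≤ b * log ((m * j : ℕ) : ℝ) ^ (1 / θ) + ε := by
        gcongr
        exact natCast_log_add_log_mul_log_two_le (by omega) (by omega)

end UpperBound

section LowerBound

variable {Ω : Type*} [MeasurableSpace Ω] {P : Measure Ω} {X : ℕ → ℕ → Ω → ℝ} {θ b : ℝ}

lemma ae_eventually_le_runMax (hθ : 1 < θ) (hb : 0 < b)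
    (hindep : iIndepFun (fun p : ℕ × ℕ => X p.1 p.2) P)
    (hcdf : ∀ k n, 1 ≤ k → 1 ≤ n → ∀ x, 0 ≤ x →
      P {ω | X k n ω < x} ≤ ENNReal.ofReal (1 - exp (-(x / b) ^ θ) / 2)) {ε : ℝ} (hε : 0 < ε) :
    ∀ᵐ ω ∂P, ∀ᶠ p : ℕ × ℕ in cofinite, 1 ≤ p.1 → 1 ≤ p.2 →
      b * log ((p.1 * p.2 : ℕ) : ℝ) ^ (1 / θ) - ε ≤ runMax X p.1 p.2 ω := by
  set v := ε / b
  obtain ⟨K, hK⟩ := exists_exp_neg_mul_exp_neg_rpow_le hθ (div_pos hε hb)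
  set C : ℕ × ℕ → Set Ω := fun p =>
    {ω | 1 ≤ p.1 ∧ 1 ≤ p.2 ∧ runMax X p.1 p.2 ω < b * log ((p.1 * p.2 : ℕ) : ℝ) ^ (1 / θ) - ε}
  have hC : ∀ p : ℕ × ℕ,
      P (C p) ≤ ENNReal.ofReal (K * (((p.1 : ℝ) ^ 2)⁻¹ * ((p.2 : ℝ) ^ 2)⁻¹)) := by
    rintro ⟨m, j⟩
    by_cases hmj : 1 ≤ m ∧ 1 ≤ j
    swap
    · have : C (m, j) = ∅ := eq_empty_of_forall_notMem fun ω hω => hmj ⟨hω.1, hω.2.1⟩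
      simp [this]
    set N : ℝ := ((m * j : ℕ) : ℝ)
    -- The tail formula needs a nonnegative threshold; raising it to `b * a ≥ 0` only enlarges
    -- the event.
    set a := max (log N ^ (1 / θ) - v) 0
    have hN : 1 ≤ N := by simp only [N]; exact_mod_cast Nat.mul_le_mul hmj.1 hmj.2
    have hx : b * log N ^ (1 / θ) - ε ≤ b * a := by
      calc b * log N ^ (1 / θ) - ε = b * (log N ^ (1 / θ) - v) := by
            rw [mul_sub, mul_div_cancel₀ ε hb.ne']
        _ ≤ b * a := by gcongr; exact le_max_left _ _
    calc P (C (m, j)) ≤ P {ω | runMax X m j ω < b * a} :=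
          measure_mono fun ω (hω : 1 ≤ m ∧ 1 ≤ j ∧ runMax X m j ω < b * log N ^ (1 / θ) - ε) =>
            hω.2.2.trans_le hx
      _ ≤ ENNReal.ofReal (exp (-(N * (exp (-a ^ θ) / 2)))) := by
          refine measure_runMax_lt_le (x := b * a) (q := exp (-a ^ θ) / 2) hindep hmj.1 hmj.2
            fun k n hk hn => ?_
          have := hcdf k n hk hn (b * a) (by positivity)
          rwa [mul_div_cancel_left₀ _ hb.ne'] at this
      _ ≤ _ := by
          refine ENNReal.ofReal_le_ofReal ((hK N hN).trans_eq ?_)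
          simp only [N, Nat.cast_mul]
          ring
  have hsum : Summable fun p : ℕ × ℕ => K * (((p.1 : ℝ) ^ 2)⁻¹ * ((p.2 : ℝ) ^ 2)⁻¹) := by
    have h := summable_nat_pow_inv.2 one_lt_two
    exact (h.mul_of_nonneg h (fun _ => by positivity) fun _ => by positivity).mul_left K
  filter_upwards [ae_eventually_cofinite_notMem_of_le_ofReal hsum hC] with ω hω
  filter_upwards [hω] with p hp hm hj
  exact not_lt.1 fun h => hp ⟨hm, hj, h⟩

end LowerBound

lemma exists_forall_max_le_of_eventually_cofinite {p : ℕ × ℕ → Prop}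
    (h : ∀ᶠ q in cofinite, p q) : ∃ N, ∀ m j, N ≤ max m j → p (m, j) := by
  obtain ⟨N, hN⟩ := ((eventually_cofinite.1 h).image fun q => max q.1 q.2).bddAbove
  refine ⟨N + 1, fun m j hmj => by_contra fun hp => ?_⟩
  have : max m j ≤ N := hN ⟨(m, j), hp, rfl⟩
  omega

lemma ae_tendstoMaxIdx_of_forall_pos {Ω : Type*} [MeasurableSpace Ω] {μ : Measure Ω}
    {f : Ω → ℕ → ℕ → ℝ} {l : ℝ}
    (h : ∀ ε > 0, ∀ᵐ ω ∂μ, ∀ᶠ p : ℕ × ℕ in cofinite, 1 ≤ p.1 → 1 ≤ p.2 →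
      |f ω p.1 p.2 - l| ≤ ε) :
    ∀ᵐ ω ∂μ, TendstoMaxIdx (f ω) l := by
  filter_upwards [ae_all_iff.2 fun r : ℕ => h (1 / (r + 1)) Nat.one_div_pos_of_nat]
    with ω hω ε hε
  obtain ⟨r, hr⟩ := exists_nat_one_div_lt hε
  obtain ⟨N, hN⟩ := exists_forall_max_le_of_eventually_cofinite (hω r)
  exact ⟨N, fun m j hm hj hmj => (hN m j hmj hm hj).trans_lt hr⟩

theorem runMax_reflectedWeibull_tendsto_zero_general
    {Ω : Type*} [MeasurableSpace Ω] (P : Measure Ω) [IsProbabilityMeasure P]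
    (θ b : ℝ) (hθ : 1 < θ) (hb : 0 < b)
    (X : ℕ → ℕ → Ω → ℝ)
    (hmeas : ∀ k n : ℕ, Measurable (X k n))
    -- the `X k n` are identically distributed with the reflected Weibull density
    -- `p(x) = (θ/(2b)) (|x|/b)^{θ-1} exp(-(|x|/b)^θ)`:
    (hlaw : ∀ k n : ℕ, 1 ≤ k → 1 ≤ n →
      Measure.map (X k n) P = MeasureTheory.volume.withDensity (fun x =>
        ENNReal.ofReal (θ / (2 * b) * (|x| / b) ^ (θ - 1) * Real.exp (-(|x| / b) ^ θ))))
    (hindep : ProbabilityTheory.iIndepFun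
      (fun p : ℕ × ℕ => X p.1 p.2) P) :
    ∀ᵐ ω ∂P, TendstoMaxIdx
      (fun m j => runMax X m j ω - b * Real.log ((m * j : ℕ) : ℝ) ^ (1 / θ)) 0 := by
  have hθ0 : 0 < θ := by linarith
  have hlaw' : ∀ k n, 1 ≤ k → 1 ≤ n → P.map (X k n) = reflectedWeibull θ b := hlaw
  refine ae_tendstoMaxIdx_of_forall_pos fun ε hε => ?_
  have hup := ae_eventually_runMax_le hθ hb (fun k n hk hn x hx =>
    (measure_lt_of_map_eq_reflectedWeibull hθ0 hb (hmeas k n) (hlaw' k n hk hn) hx).trans_le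
      (ENNReal.ofReal_le_ofReal (half_le_self (exp_pos _).le))) hε
  have hlo := ae_eventually_le_runMax hθ hb hindep (fun k n hk hn _ hx =>
    measure_lt_le_of_map_eq_reflectedWeibull hθ0 hb (hmeas k n) (hlaw' k n hk hn) hx) hε
  filter_upwards [hup, hlo] with ω hup hlo
  filter_upwards [hup, hlo] with p hup hlo hm hj
  rw [sub_zero, abs_le]
  constructor <;> linarith [hup hm hj, hlo hm hj]

/-- Example 2: for a double array of i.i.d. reflected Weibull random
variables with parameters `θ > 1`, `b > 0`, if their common `φ`-subgaussian norm (for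
`φ(x) = ((θ-1)/θ) (θ/b^θ)^{1/(θ-1)} |x|^{θ/(θ-1)}`, whose Young–Fenchel transform is
`ψ(x) = (|x|/b)^θ`) is at most `1`, then
`max_{1≤k≤m,1≤n≤j} X_{k,n} - b (ln(mj))^{1/θ} → 0` a.s. as `m ∨ j → ∞`. -/
theorem runMax_reflectedWeibull_tendsto_zero
    {Ω : Type*} [MeasurableSpace Ω] (P : Measure Ω) [IsProbabilityMeasure P]
    (θ b : ℝ) (hθ : 1 < θ) (hb : 0 < b)
    (X : ℕ → ℕ → Ω → ℝ)
    (hmeas : ∀ k n : ℕ, Measurable (X k n))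
    -- the `X k n` are identically distributed with the reflected Weibull density
    -- `p(x) = (θ/(2b)) (|x|/b)^{θ-1} exp(-(|x|/b)^θ)`:
    (hlaw : ∀ k n : ℕ, 1 ≤ k → 1 ≤ n →
      Measure.map (X k n) P = MeasureTheory.volume.withDensity (fun x =>
        ENNReal.ofReal (θ / (2 * b) * (|x| / b) ^ (θ - 1) * Real.exp (-(|x| / b) ^ θ))))
    (hindep : ProbabilityTheory.iIndepFun
      (fun p : ℕ × ℕ => X p.1 p.2) P)
    -- the common `φ`-subgaussian norm is at most `1`:
    (hsub : ∀ k n : ℕ, 1 ≤ k → 1 ≤ n → IsPhiSubGaussian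
      (fun x => (θ - 1) / θ * (θ / b ^ θ) ^ (1 / (θ - 1)) * |x| ^ (θ / (θ - 1))) P (X k n))
    (hτ : ∀ k n : ℕ, 1 ≤ k → 1 ≤ n → tauPhi
      (fun x => (θ - 1) / θ * (θ / b ^ θ) ^ (1 / (θ - 1)) * |x| ^ (θ / (θ - 1))) P (X k n)
        ≤ 1) :
    ∀ᵐ ω ∂P, TendstoMaxIdx
      (fun m j => runMax X m j ω - b * Real.log ((m * j : ℕ) : ℝ) ^ (1 / θ)) 0 :=
  runMax_reflectedWeibull_tendsto_zero_general P θ b hθ hb X hmeas hlaw hindep
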